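/- arXiv:2309.15763 — 2 statements merged into one kernel-verified Lean document; each statement's English description precedes it below -/
import Mathlib

section
/- Let CS be an arbitrary constant specification for JD. The canonical model M^C = (W^C, W₀^C, V^C, E^C), where W^C is the power set of the set of all formulas, W₀^C is the set of maximal JD_CS-consistent sets of formulas, V^C(Γ,F) = 1 iff F ∈ Γ, and E^C(Γ,t) = {Δ ∈ W^C : Δ ⊇ Γ/t} with Γ/t = {F : t:F ∈ Γ}, is a D-arbitrary CS-subset model. -/
/-- Justification terms: constants, variables, application, sum, bang. -/
inductive Tm : Type
  | const : Nat → Tm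
  | var   : Nat → Tm
  | app   : Tm → Tm → Tm
  | sum   : Tm → Tm → Tm
  | bang  : Tm → Tm

/-- Formulas of justification logic. -/
inductive Fm : Type
  | prop : Nat → Fm
  | bot  : Fm
  | imp  : Fm → Fm → Fm
  | just : Tm → Fm → Fm

/-- ¬A := A → ⊥ -/
def Fm.neg (A : Fm) : Fm := Fm.imp A Fm.bot
/-- ⊤ := ¬⊥ -/
def Fm.top : Fm := Fm.neg Fm.bot
/-- A ∨ B := ¬A → B -/
def Fm.disj (A B : Fm) : Fm := Fm.imp (Fm.neg A) B
/-- A ∧ B := ¬(A → ¬B) -/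
def Fm.conj (A B : Fm) : Fm := Fm.neg (Fm.imp A (Fm.neg B))

/-- A classical propositional tautology in this language: true under every
Boolean valuation that respects ⊥ and →, treating `t:F` and atoms as arbitrary atoms. -/
def IsTaut (A : Fm) : Prop :=
  ∀ v : Fm → Bool,
    v Fm.bot = false →
    (∀ F G : Fm, v (Fm.imp F G) = (!(v F) || v G)) →
    v A = true

/-- !^n t -/
def bangIter : Nat → Tm → Tm
  | 0, t => t
  | n + 1, t => Tm.bang (bangIter n t)

/-- `anFm n c A` is the formula !^n c : !^{n-1} c : ... : !c : c : A. -/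
def anFm : Nat → Tm → Fm → Fm
  | 0, c, A => Fm.just c A
  | n + 1, c, A => Fm.just (bangIter (n + 1) c) (anFm n c A)

/-- Axioms of JD: classical tautologies, j+, j, jd. -/
inductive JDAxiom : Fm → Prop
  | cl {A : Fm} : IsTaut A → JDAxiom A
  | jplus (s t : Tm) (A : Fm) :
      JDAxiom (Fm.imp (Fm.disj (Fm.just s A) (Fm.just t A)) (Fm.just (Tm.sum s t) A))
  | j (s t : Tm) (A B : Fm) :
      JDAxiom (Fm.imp (Fm.just s (Fm.imp A B)) (Fm.imp (Fm.just t A) (Fm.just (Tm.app s t) B)))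
  | jd (t : Tm) : JDAxiom (Fm.neg (Fm.just t Fm.bot))

/-- Axioms of JNoC: classical tautologies, j+, j, noc. -/
inductive JNoCAxiom : Fm → Prop
  | cl {A : Fm} : IsTaut A → JNoCAxiom A
  | jplus (s t : Tm) (A : Fm) :
      JNoCAxiom (Fm.imp (Fm.disj (Fm.just s A) (Fm.just t A)) (Fm.just (Tm.sum s t) A))
  | j (s t : Tm) (A B : Fm) :
      JNoCAxiom (Fm.imp (Fm.just s (Fm.imp A B)) (Fm.imp (Fm.just t A) (Fm.just (Tm.app s t) B)))
  | noc (t : Tm) (A : Fm) :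
      JNoCAxiom (Fm.neg (Fm.conj (Fm.just t A) (Fm.just t (Fm.neg A))))

/-- A constant specification for the logic with axioms `Ax`: a set of pairs (c, A)
where c is (the index of) a constant and A is an axiom. -/
def IsConstSpec (Ax : Fm → Prop) (CS : Set (Nat × Fm)) : Prop :=
  ∀ p ∈ CS, Ax p.2

/-- CS is axiomatically appropriate: every axiom is justified by some constant. -/
def AxAppropriate (Ax : Fm → Prop) (CS : Set (Nat × Fm)) : Prop :=
  ∀ A : Fm, Ax A → ∃ c : Nat, (c, A) ∈ CS

/-- Hilbert-style derivability from axioms `Ax`, modus ponens, and axiom necessitation. -/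
inductive Deriv (Ax : Fm → Prop) (CS : Set (Nat × Fm)) : Fm → Prop
  | ax {A : Fm} : Ax A → Deriv Ax CS A
  | mp {A B : Fm} : Deriv Ax CS (Fm.imp A B) → Deriv Ax CS A → Deriv Ax CS B
  | an {c : Nat} {A : Fm} (n : Nat) : (c, A) ∈ CS → Deriv Ax CS (anFm n (Tm.const c) A)

/-- A subset-model frame: worlds, normal worlds, valuation, evidence function. -/
structure SModel where
  W : Type
  W0 : Set W
  V : W → Fm → Prop
  E : W → Tm → Set W

/-- Truth set [A]. -/
def SModel.ts (M : SModel) (A : Fm) : Set M.W := {w : M.W | M.V w A}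

/-- APP_ω(s,t). -/
def SModel.APP (M : SModel) (ω : M.W) (s t : Tm) : Set Fm :=
  {F : Fm | ∃ H : Fm, M.E ω s ⊆ M.ts (Fm.imp H F) ∧ M.E ω t ⊆ M.ts H}

/-- The conditions common to general, D-arbitrary and NoC CS-subset models. -/
def CoreConds (CS : Set (Nat × Fm)) (M : SModel) : Prop :=
  M.W0.Nonempty ∧
  ∀ ω ∈ M.W0,
    (¬ M.V ω Fm.bot) ∧
    (∀ F G : Fm, M.V ω (Fm.imp F G) ↔ (¬ M.V ω F ∨ M.V ω G)) ∧
    (∀ (t : Tm) (F : Fm), M.V ω (Fm.just t F) ↔ M.E ω t ⊆ M.ts F) ∧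
    (∀ s t : Tm, M.E ω (Tm.sum s t) ⊆ M.E ω s ∩ M.E ω t) ∧
    (∀ s t : Tm, M.E ω (Tm.app s t) ⊆ {υ : M.W | ∀ F ∈ M.APP ω s t, υ ∈ M.ts F}) ∧
    (∀ (c : Nat) (A : Fm), (c, A) ∈ CS →
      M.E ω (Tm.const c) ⊆ M.ts A ∧
      ∀ n : Nat, M.E ω (bangIter (n + 1) (Tm.const c)) ⊆ M.ts (anFm n (Tm.const c) A))

/-- General CS-subset model: every E(ω,t) meets the normal worlds. -/
def IsGeneralModel (CS : Set (Nat × Fm)) (M : SModel) : Prop :=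
  CoreConds CS M ∧ ∀ ω ∈ M.W0, ∀ t : Tm, ∃ υ ∈ M.W0, υ ∈ M.E ω t

/-- D-arbitrary CS-subset model: every E(ω,t) meets W_{¬⊥}. -/
def IsDArbModel (CS : Set (Nat × Fm)) (M : SModel) : Prop :=
  CoreConds CS M ∧ ∀ ω ∈ M.W0, ∀ t : Tm, ∃ υ : M.W, ¬ M.V υ Fm.bot ∧ υ ∈ M.E ω t

/-- NoC CS-subset model: every E(ω,t) meets W_nc. -/
def IsNoCModel (CS : Set (Nat × Fm)) (M : SModel) : Prop :=
  CoreConds CS M ∧ ∀ ω ∈ M.W0, ∀ t : Tm,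
    ∃ υ : M.W, (∀ A : Fm, ¬ M.V υ A ∨ ¬ M.V υ (Fm.neg A)) ∧ υ ∈ M.E ω t

def GeneralValid (CS : Set (Nat × Fm)) (F : Fm) : Prop :=
  ∀ M : SModel, IsGeneralModel CS M → ∀ ω ∈ M.W0, M.V ω F

def DArbValid (CS : Set (Nat × Fm)) (F : Fm) : Prop :=
  ∀ M : SModel, IsDArbModel CS M → ∀ ω ∈ M.W0, M.V ω F

def NoCValid (CS : Set (Nat × Fm)) (F : Fm) : Prop :=
  ∀ M : SModel, IsNoCModel CS M → ∀ ω ∈ M.W0, M.V ω F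

/-- Γ is consistent: no finite list of members of Γ lets the logic derive ⊥
(i.e. A₁ → ... → Aₙ → ⊥ is not derivable for A₁,...,Aₙ ∈ Γ). -/
def ConsistentSet (Ax : Fm → Prop) (CS : Set (Nat × Fm)) (Γ : Set Fm) : Prop :=
  ¬ ∃ L : List Fm, (∀ A ∈ L, A ∈ Γ) ∧ Deriv Ax CS (L.foldr Fm.imp Fm.bot)

/-- Maximal consistent: consistent and every proper superset is inconsistent. -/
def MaxConsistent (Ax : Fm → Prop) (CS : Set (Nat × Fm)) (Γ : Set Fm) : Prop :=
  ConsistentSet Ax CS Γ ∧ ∀ Δ : Set Fm, Γ ⊂ Δ → ¬ ConsistentSet Ax CS Δ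

/-- The canonical model: worlds are arbitrary sets of formulas, normal worlds are
the maximal consistent sets, V^C(Γ,F)=1 iff F ∈ Γ, E^C(Γ,t) = {Δ : Δ ⊇ Γ/t}. -/
def canonicalModel (Ax : Fm → Prop) (CS : Set (Nat × Fm)) : SModel where
  W := Set Fm
  W0 := {Γ : Set Fm | MaxConsistent Ax CS Γ}
  V := fun Γ F => F ∈ Γ
  E := fun Γ t => {Δ : Set Fm | {F : Fm | Fm.just t F ∈ Γ} ⊆ Δ}

/-!
Maximal consistent sets are deductively closed and contain `¬A` whenever they omit `A`; this gives
the Boolean clauses of the canonical model. Since `Γ/t` is the least element of `E^C(Γ,t)`, the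
evidence clauses reduce to `s:F ∈ Γ → (s+t):F ∈ Γ`, to closure under axiom `j`, and to the
instances of axiom necessitation, all of which lie in every maximal consistent set. The world `Γ/t`
omits `⊥` because `¬(t:⊥) ∈ Γ` by `jd`. Finally `W₀^C` is nonempty by Lindenbaum's lemma applied
to `∅`, which is consistent because the forgetful projection (`t:F ↦ F`) of every theorem is a
tautology.
-/

theorem Fm.imp_eq_true_iff {v : Fm → Bool}
    (himp : ∀ F G : Fm, v (Fm.imp F G) = (!(v F) || v G)) (F G : Fm) :
    v (Fm.imp F G) = true ↔ (v F = true → v G = true) := by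
  rw [himp]; cases v F <;> simp

theorem Fm.foldr_imp_eq_true_iff {v : Fm → Bool}
    (himp : ∀ F G : Fm, v (Fm.imp F G) = (!(v F) || v G)) (L : List Fm) (B : Fm) :
    v (L.foldr Fm.imp B) = true ↔ ((∀ A ∈ L, v A = true) → v B = true) := by
  induction L with
  | nil => simp
  | cons A L ih =>
    simp only [List.foldr_cons, Fm.imp_eq_true_iff himp, ih, List.forall_mem_cons]
    tauto

theorem isTaut_foldr_imp_bot_imp_neg {M M' : List Fm} {A : Fm} (hM : ∀ B ∈ M, B = A ∨ B ∈ M') :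
    IsTaut (Fm.imp (M.foldr Fm.imp Fm.bot) (M'.foldr Fm.imp (Fm.neg A))) := by
  intro v hbot himp
  simp only [Fm.imp_eq_true_iff himp, Fm.foldr_imp_eq_true_iff himp, Fm.neg, hbot]
  intro h hM' hA
  exact h fun B hB => (hM B hB).elim (· ▸ hA) (hM' B)

theorem isTaut_foldr_imp_cut (L M : List Fm) (A : Fm) :
    IsTaut (Fm.imp (L.foldr Fm.imp A)
      (Fm.imp (M.foldr Fm.imp (Fm.neg A)) ((L ++ M).foldr Fm.imp Fm.bot))) := by
  intro v hbot himp
  simp only [Fm.imp_eq_true_iff himp, Fm.foldr_imp_eq_true_iff himp, Fm.neg, hbot, List.mem_append]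
  intro hL hM hLM
  exact hM (fun B hB => hLM B (.inr hB)) (hL fun B hB => hLM B (.inl hB))

def Fm.forgetfulVal : Fm → Bool
  | Fm.prop _ => true
  | Fm.bot => false
  | Fm.imp F G => !F.forgetfulVal || G.forgetfulVal
  | Fm.just _ F => F.forgetfulVal

theorem Fm.forgetfulVal_anFm (n : Nat) (c : Tm) (A : Fm) :
    (anFm n c A).forgetfulVal = A.forgetfulVal := by
  induction n with
  | zero => rfl
  | succ n ih => exact ih

theorem JDAxiom.forgetfulVal_eq_true {A : Fm} (h : JDAxiom A) : A.forgetfulVal = true := by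
  cases h with
  | cl h => exact h _ rfl fun _ _ => rfl
  | jplus s t A => simp [Fm.forgetfulVal, Fm.disj, Fm.neg]
  | j s t A B => simp only [Fm.forgetfulVal]; cases A.forgetfulVal <;> simp
  | jd t => rfl

theorem Deriv.forgetfulVal_eq_true {Ax : Fm → Prop} {CS : Set (Nat × Fm)}
    (hAx : ∀ {A}, Ax A → A.forgetfulVal = true) (hCS : IsConstSpec Ax CS) {A : Fm}
    (h : Deriv Ax CS A) : A.forgetfulVal = true := by
  induction h with
  | ax h => exact hAx h
  | mp _ _ ih₁ ih₂ => simpa [Fm.forgetfulVal, ih₂] using ih₁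
  | an n hc => rw [Fm.forgetfulVal_anFm]; exact hAx (hCS _ hc)

theorem consistentSet_empty {Ax : Fm → Prop} {CS : Set (Nat × Fm)}
    (hAx : ∀ {A}, Ax A → A.forgetfulVal = true) (hCS : IsConstSpec Ax CS) :
    ConsistentSet Ax CS ∅ := by
  rintro ⟨L, hL, hd⟩
  obtain rfl : L = [] := List.eq_nil_iff_forall_not_mem.2 hL
  exact Bool.false_ne_true (hd.forgetfulVal_eq_true hAx hCS)

theorem maxConsistent_iff_maximal {Ax : Fm → Prop} {CS : Set (Nat × Fm)} {Γ : Set Fm} :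
    MaxConsistent Ax CS Γ ↔ Maximal (ConsistentSet Ax CS) Γ :=
  ⟨fun h => ⟨h.1, fun Δ hΔ hΓΔ => not_not.1 fun hΔΓ => h.2 Δ ⟨hΓΔ, hΔΓ⟩ hΔ⟩,
    fun h => ⟨h.1, fun _ => h.not_prop_of_ssuperset⟩⟩

theorem ConsistentSet.exists_maxConsistent {Ax : Fm → Prop} {CS : Set (Nat × Fm)} {Γ : Set Fm}
    (hΓ : ConsistentSet Ax CS Γ) : ∃ Δ, Γ ⊆ Δ ∧ MaxConsistent Ax CS Δ := by
  simp_rw [maxConsistent_iff_maximal]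
  refine zorn_subset_nonempty _
    (fun c hc hchain hne => ⟨⋃₀ c, ?_, fun _ => Set.subset_sUnion_of_mem⟩) Γ hΓ
  rintro ⟨L, hL, hd⟩
  obtain ⟨Δ, hΔc, hLΔ⟩ := hchain.directedOn.exists_mem_subset_of_finite_of_subset_sUnion hne
    L.finite_toSet hL
  exact hc hΔc ⟨L, hLΔ, hd⟩

namespace MaxConsistent

variable {Ax : Fm → Prop} {CS : Set (Nat × Fm)} {Γ : Set Fm}

theorem exists_deriv_neg_of_notMem (hTaut : ∀ {A}, IsTaut A → Ax A)
    (hΓ : MaxConsistent Ax CS Γ) {A : Fm} (hA : A ∉ Γ) :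
    ∃ M : List Fm, (∀ B ∈ M, B ∈ Γ) ∧ Deriv Ax CS (M.foldr Fm.imp (Fm.neg A)) := by
  classical
  obtain ⟨M, hM, hd⟩ := not_not.1 (hΓ.2 _ (Set.ssubset_insert hA))
  have hfilter : ∀ B ∈ M, B = A ∨ B ∈ M.filter (· ≠ A) := fun B hB => by
    by_cases h : B = A <;> simp [h, hB]
  refine ⟨M.filter (· ≠ A), fun B hB => ?_,
    .mp (.ax (hTaut (isTaut_foldr_imp_bot_imp_neg hfilter))) hd⟩
  obtain ⟨hBM, hBA⟩ := List.mem_filter.1 hB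
  exact (hM B hBM).resolve_left (by simpa using hBA)

theorem mem_of_deriv_foldr (hTaut : ∀ {A}, IsTaut A → Ax A) (hΓ : MaxConsistent Ax CS Γ)
    {L : List Fm} {A : Fm} (hL : ∀ B ∈ L, B ∈ Γ) (hd : Deriv Ax CS (L.foldr Fm.imp A)) :
    A ∈ Γ := by
  by_contra hA
  obtain ⟨M, hM, hdM⟩ := hΓ.exists_deriv_neg_of_notMem hTaut hA
  refine hΓ.1 ⟨L ++ M, fun B hB => (List.mem_append.1 hB).elim (hL B) (hM B), ?_⟩
  exact .mp (.mp (.ax (hTaut (isTaut_foldr_imp_cut L M A))) hd) hdM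

theorem mem_of_deriv (hTaut : ∀ {A}, IsTaut A → Ax A) (hΓ : MaxConsistent Ax CS Γ)
    {A : Fm} (hd : Deriv Ax CS A) : A ∈ Γ :=
  hΓ.mem_of_deriv_foldr hTaut (L := []) (by simp) hd

theorem mem_of_isTaut (hTaut : ∀ {A}, IsTaut A → Ax A) (hΓ : MaxConsistent Ax CS Γ)
    {L : List Fm} {A : Fm} (hL : ∀ B ∈ L, B ∈ Γ) (h : IsTaut (L.foldr Fm.imp A)) : A ∈ Γ :=
  hΓ.mem_of_deriv_foldr hTaut hL (.ax (hTaut h))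

theorem neg_mem_of_notMem (hTaut : ∀ {A}, IsTaut A → Ax A) (hΓ : MaxConsistent Ax CS Γ)
    {A : Fm} (hA : A ∉ Γ) : Fm.neg A ∈ Γ :=
  have ⟨_, hM, hd⟩ := hΓ.exists_deriv_neg_of_notMem hTaut hA
  hΓ.mem_of_deriv_foldr hTaut hM hd

theorem mem_of_imp_mem (hTaut : ∀ {A}, IsTaut A → Ax A) (hΓ : MaxConsistent Ax CS Γ)
    {A B : Fm} (hAB : Fm.imp A B ∈ Γ) (hA : A ∈ Γ) : B ∈ Γ := by
  refine hΓ.mem_of_isTaut hTaut (L := [Fm.imp A B, A]) (by simp [hAB, hA]) fun v _ himp => ?_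
  simp only [List.foldr, Fm.imp_eq_true_iff himp]
  exact id

theorem bot_notMem (hTaut : ∀ {A}, IsTaut A → Ax A) (hΓ : MaxConsistent Ax CS Γ) :
    Fm.bot ∉ Γ := fun h =>
  hΓ.1 ⟨[Fm.bot], by simpa using h, .ax (hTaut fun v _ himp => (Fm.imp_eq_true_iff himp _ _).2 id)⟩

theorem imp_mem_iff (hTaut : ∀ {A}, IsTaut A → Ax A) (hΓ : MaxConsistent Ax CS Γ) {A B : Fm} :
    Fm.imp A B ∈ Γ ↔ A ∉ Γ ∨ B ∈ Γ := by
  refine ⟨fun h => or_iff_not_imp_left.2 fun hA => hΓ.mem_of_imp_mem hTaut h (not_not.1 hA),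
    fun h => h.elim (fun hA => ?_) (fun hB => ?_)⟩
  · refine hΓ.mem_of_isTaut hTaut (L := [Fm.neg A]) (by simpa using hΓ.neg_mem_of_notMem hTaut hA)
      fun v hbot himp => ?_
    simp only [List.foldr, Fm.neg, Fm.imp_eq_true_iff himp, hbot]
    exact fun h hA => absurd (h hA) Bool.false_ne_true
  · refine hΓ.mem_of_isTaut hTaut (L := [B]) (by simpa using hB) fun v _ himp => ?_
    simp only [List.foldr, Fm.imp_eq_true_iff himp]
    exact fun h _ => h

theorem disj_mem_iff (hTaut : ∀ {A}, IsTaut A → Ax A) (hΓ : MaxConsistent Ax CS Γ) {A B : Fm} :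
    Fm.disj A B ∈ Γ ↔ A ∈ Γ ∨ B ∈ Γ := by
  simp only [Fm.disj, Fm.neg, hΓ.imp_mem_iff hTaut, hΓ.bot_notMem hTaut, or_false, not_not]

theorem just_sum_mem (hΓ : MaxConsistent JDAxiom CS Γ) {s t : Tm} {F : Fm}
    (h : Fm.just s F ∈ Γ ∨ Fm.just t F ∈ Γ) : Fm.just (Tm.sum s t) F ∈ Γ :=
  hΓ.mem_of_imp_mem JDAxiom.cl (hΓ.mem_of_deriv JDAxiom.cl (.ax (.jplus s t F)))
    ((hΓ.disj_mem_iff JDAxiom.cl).2 h)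

theorem just_app_mem (hΓ : MaxConsistent JDAxiom CS Γ) {s t : Tm} {A B : Fm}
    (hs : Fm.just s (Fm.imp A B) ∈ Γ) (ht : Fm.just t A ∈ Γ) : Fm.just (Tm.app s t) B ∈ Γ :=
  hΓ.mem_of_imp_mem JDAxiom.cl
    (hΓ.mem_of_imp_mem JDAxiom.cl (hΓ.mem_of_deriv JDAxiom.cl (.ax (.j s t A B))) hs) ht

theorem just_bot_notMem (hΓ : MaxConsistent JDAxiom CS Γ) (t : Tm) : Fm.just t Fm.bot ∉ Γ :=
  fun h => hΓ.bot_notMem JDAxiom.cl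
    (hΓ.mem_of_imp_mem JDAxiom.cl (hΓ.mem_of_deriv JDAxiom.cl (.ax (.jd t))) h)

end MaxConsistent

theorem canonicalModel_V_just_iff (Ax : Fm → Prop) (CS : Set (Nat × Fm)) (Γ : Set Fm)
    (t : Tm) (F : Fm) :
    (canonicalModel Ax CS).V Γ (Fm.just t F) ↔
      (canonicalModel Ax CS).E Γ t ⊆ (canonicalModel Ax CS).ts F :=
  ⟨fun h _ hΔ => hΔ h, fun h => @h {G | Fm.just t G ∈ Γ} fun _ => id⟩

theorem coreConds_canonicalModel_JD {CS : Set (Nat × Fm)} (hCS : IsConstSpec JDAxiom CS) :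
    CoreConds CS (canonicalModel JDAxiom CS) := by
  obtain ⟨Γ₀, -, hΓ₀⟩ :=
    (consistentSet_empty JDAxiom.forgetfulVal_eq_true hCS).exists_maxConsistent
  refine ⟨⟨Γ₀, hΓ₀⟩, fun Γ (hΓ : MaxConsistent JDAxiom CS Γ) => ⟨hΓ.bot_notMem JDAxiom.cl,
    fun _ _ => hΓ.imp_mem_iff JDAxiom.cl, canonicalModel_V_just_iff _ _ Γ, ?sum, ?app, ?cs⟩⟩
  case sum =>
    exact fun s t Δ hΔ => ⟨fun F hF => hΔ (hΓ.just_sum_mem (.inl hF)),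
      fun F hF => hΔ (hΓ.just_sum_mem (.inr hF))⟩
  case app =>
    rintro s t Δ hΔ F ⟨H, hs, ht⟩
    exact hΔ (hΓ.just_app_mem ((canonicalModel_V_just_iff _ _ Γ _ _).2 hs)
      ((canonicalModel_V_just_iff _ _ Γ _ _).2 ht))
  case cs =>
    exact fun c A hcA => ⟨fun _ hΔ => hΔ (hΓ.mem_of_deriv JDAxiom.cl (.an 0 hcA)),
      fun n _ hΔ => hΔ (hΓ.mem_of_deriv JDAxiom.cl (.an (n + 1) hcA))⟩

/-- The canonical model for JD_CS is a D-arbitrary CS-subset model, for arbitrary CS. -/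
theorem stmt_5 (CS : Set (Nat × Fm)) (hCS : IsConstSpec JDAxiom CS) :
    IsDArbModel CS (canonicalModel JDAxiom CS) :=
  ⟨coreConds_canonicalModel_JD hCS, fun (Γ : Set Fm) hΓ t =>
    ⟨{F | Fm.just t F ∈ Γ}, hΓ.just_bot_notMem t, fun _ => id⟩⟩
end

section
/- (Completeness of JNoC_CS for NoC subset models) Let CS be an arbitrary constant specification for JNoC. For every formula F, if F is NoC CS-valid then JNoC_CS ⊢ F. -/
/-!
Canonical model. If `F` is not derivable, `{¬F}` is consistent and extends by Zorn's lemma to a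
maximal consistent set `Γ`. In the canonical model the normal worlds are the maximal consistent
sets and the valuation is membership, so no truth lemma is needed: the subset-model conditions
at a normal world are closure properties of maximal consistent sets under the axioms and under
AN. Since `E(Γ, t)` ranges over *all* supersets of `Γ/t = {A | t:A ∈ Γ}`, the set `Γ/t` itself
lies in `E(Γ, t)`, and it is a non-contradictory world because `noc` keeps `t:A` and `t:¬A` from
both lying in `Γ`. Validity then puts `F` into `Γ` next to `¬F`.
-/

def IsValuation (v : Fm → Bool) : Prop :=
  v Fm.bot = false ∧ ∀ F G : Fm, v (Fm.imp F G) = (!(v F) || v G)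

def Entails (As : List Fm) (B : Fm) : Prop :=
  ∀ v : Fm → Bool, IsValuation v → (∀ A ∈ As, v A = true) → v B = true

lemma IsValuation.foldr_imp {v : Fm → Bool} (hv : IsValuation v) (L : List Fm) (B : Fm) :
    v (L.foldr Fm.imp B) = true ↔ ((∀ A ∈ L, v A = true) → v B = true) := by
  induction L with
  | nil => simp
  | cons A L ih =>
    rw [List.foldr_cons, hv.2, Bool.or_eq_true, Bool.not_eq_true', ih, List.forall_mem_cons]
    cases v A <;> simp

lemma isTaut_foldr_imp {As : List Fm} {B : Fm} (h : Entails As B) :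
    IsTaut (As.foldr Fm.imp B) :=
  fun v hbot himp => (IsValuation.foldr_imp ⟨hbot, himp⟩ As B).2 (h v ⟨hbot, himp⟩)

section Entailments

variable (P Q R : Fm)

lemma entails_mp : Entails [Fm.imp P Q, P] Q := by
  intro v hv; simp [hv.2]; grind

lemma entails_mp₂ : Entails [Fm.imp P (Fm.imp Q R), P, Q] R := by
  intro v hv; simp [hv.2]; grind

lemma entails_imp_of_neg : Entails [Fm.neg P] (Fm.imp P Q) := by
  intro v hv; simp [hv.1, hv.2, Fm.neg]; grind

lemma entails_imp_of_right : Entails [Q] (Fm.imp P Q) := by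
  intro v hv; simp [hv.2]; grind

lemma entails_mp_disj_left : Entails [Fm.imp (Fm.disj P Q) R, P] R := by
  intro v hv; simp [hv.1, hv.2, Fm.disj, Fm.neg]; grind

lemma entails_mp_disj_right : Entails [Fm.imp (Fm.disj P Q) R, Q] R := by
  intro v hv; simp [hv.1, hv.2, Fm.disj, Fm.neg]; grind

lemma entails_bot_of_not_conj : Entails [Fm.neg (Fm.conj P Q), P, Q] Fm.bot := by
  intro v hv; simp [hv.1, hv.2, Fm.conj, Fm.neg]; grind

end Entailments

variable {CS : Set (Nat × Fm)}

lemma deriv_of_foldr_imp {As : List Fm} {B : Fm} (h : Deriv JNoCAxiom CS (As.foldr Fm.imp B))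
    (hAs : ∀ A ∈ As, Deriv JNoCAxiom CS A) : Deriv JNoCAxiom CS B := by
  induction As with
  | nil => exact h
  | cons A As ih =>
    rw [List.forall_mem_cons] at hAs
    exact ih (h.mp hAs.1) hAs.2

lemma deriv_of_entails {As : List Fm} {B : Fm} (h : Entails As B)
    (hAs : ∀ A ∈ As, Deriv JNoCAxiom CS A) : Deriv JNoCAxiom CS B :=
  deriv_of_foldr_imp (.ax (.cl (isTaut_foldr_imp h))) hAs

variable (CS) in
def DerivableFrom (Γ : Set Fm) (B : Fm) : Prop :=
  ∃ L : List Fm, (∀ A ∈ L, A ∈ Γ) ∧ Deriv JNoCAxiom CS (L.foldr Fm.imp B)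

section DerivableFrom

variable {Γ : Set Fm}

lemma derivableFrom_of_deriv {B : Fm} (h : Deriv JNoCAxiom CS B) : DerivableFrom CS Γ B :=
  ⟨[], by simp, h⟩

lemma derivableFrom_of_mem {B : Fm} (h : B ∈ Γ) : DerivableFrom CS Γ B :=
  ⟨[B], by simpa using h, deriv_of_entails (As := []) (fun v hv _ => by simp [hv.2]) (by simp)⟩

lemma DerivableFrom.mp {A B : Fm} (hAB : DerivableFrom CS Γ (Fm.imp A B))
    (hA : DerivableFrom CS Γ A) : DerivableFrom CS Γ B := by
  obtain ⟨L₁, hL₁, hd₁⟩ := hAB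
  obtain ⟨L₂, hL₂, hd₂⟩ := hA
  refine ⟨L₁ ++ L₂, by simpa [or_imp, forall_and] using And.intro hL₁ hL₂, ?_⟩
  refine deriv_of_entails (As := [L₁.foldr Fm.imp (Fm.imp A B), L₂.foldr Fm.imp A])
    (fun v hv h => ?_) (by simp [hd₁, hd₂])
  simp only [List.mem_cons, List.not_mem_nil, or_false, forall_eq_or_imp, forall_eq,
    hv.foldr_imp, hv.2, Bool.or_eq_true, Bool.not_eq_true'] at h
  rw [hv.foldr_imp]
  intro hall
  simp only [List.mem_append, or_imp, forall_and] at hall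
  rcases h.1 hall.1 with hA | hB
  · simp [h.2 hall.2] at hA
  · exact hB

lemma DerivableFrom.of_entails {As : List Fm} {B : Fm} (h : Entails As B)
    (hAs : ∀ A ∈ As, DerivableFrom CS Γ A) : DerivableFrom CS Γ B := by
  induction As generalizing B with
  | nil => exact derivableFrom_of_deriv (deriv_of_entails h (by simp))
  | cons A As ih =>
    rw [List.forall_mem_cons] at hAs
    refine (ih (B := Fm.imp A B) (fun v hv hv' => ?_) hAs.2).mp hAs.1
    rw [hv.2]
    cases hA : v A
    · rfl
    · simpa using h v hv (List.forall_mem_cons.2 ⟨hA, hv'⟩)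

open Classical in
lemma DerivableFrom.imp_of_insert {A B : Fm} (h : DerivableFrom CS (insert A Γ) B) :
    DerivableFrom CS Γ (Fm.imp A B) := by
  obtain ⟨L, hL, hd⟩ := h
  refine ⟨L.filter (· ≠ A), fun C hC => ?_,
    deriv_of_entails (As := [L.foldr Fm.imp B]) (fun v hv h => ?_) (by simp [hd])⟩
  · rw [List.mem_filter, decide_eq_true_iff] at hC
    exact (hL C hC.1).resolve_left hC.2
  · simp only [List.mem_cons, List.not_mem_nil, or_false, forall_eq, hv.foldr_imp] at h
    rw [hv.foldr_imp, hv.2]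
    intro hall
    cases hA : v A
    · rfl
    · simp only [Bool.not_true, Bool.false_or]
      refine h fun C hC => ?_
      by_cases hCA : C = A
      · exact hCA ▸ hA
      · exact hall C (by simp [hC, hCA])

end DerivableFrom

lemma ConsistentSet.exists_maxConsistent_superset {Ax : Fm → Prop} {Γ : Set Fm}
    (h : ConsistentSet Ax CS Γ) : ∃ Δ, Γ ⊆ Δ ∧ MaxConsistent Ax CS Δ := by
  have hchain : ∀ c ⊆ {Δ | ConsistentSet Ax CS Δ}, IsChain (· ⊆ ·) c → c.Nonempty →
      ∃ ub ∈ {Δ | ConsistentSet Ax CS Δ}, ∀ s ∈ c, s ⊆ ub := by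
    refine fun c hc hc_chain hc_ne => ⟨⋃₀ c, ?_, fun _ => Set.subset_sUnion_of_mem⟩
    rintro ⟨L, hL, hd⟩
    obtain ⟨s, hs, hLs⟩ := hc_chain.directedOn.exists_mem_subset_of_finite_of_subset_sUnion
      hc_ne L.finite_toSet hL
    exact hc hs ⟨L, hLs, hd⟩
  obtain ⟨Δ, hΓΔ, hΔ⟩ := zorn_subset_nonempty _ hchain Γ h
  exact ⟨Δ, hΓΔ, hΔ.1, fun Δ' hΔΔ' hΔ' => hΔΔ'.2 (hΔ.2 hΔ' hΔΔ'.1)⟩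

section MaxConsistent

variable {Γ : Set Fm} (hΓ : MaxConsistent JNoCAxiom CS Γ)
include hΓ

lemma MaxConsistent.derivableFrom_insert_bot {A : Fm} (hA : A ∉ Γ) :
    DerivableFrom CS (insert A Γ) Fm.bot :=
  not_not.1 (hΓ.2 _ (Set.ssubset_insert hA))

lemma MaxConsistent.mem_of_derivableFrom {A : Fm} (h : DerivableFrom CS Γ A) : A ∈ Γ := by
  by_contra hA
  exact hΓ.1 ((hΓ.derivableFrom_insert_bot hA).imp_of_insert.mp h)

lemma MaxConsistent.neg_mem {A : Fm} (hA : A ∉ Γ) : Fm.neg A ∈ Γ :=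
  hΓ.mem_of_derivableFrom (hΓ.derivableFrom_insert_bot hA).imp_of_insert

lemma MaxConsistent.mem_of_deriv_s7 {A : Fm} (h : Deriv JNoCAxiom CS A) : A ∈ Γ :=
  hΓ.mem_of_derivableFrom (derivableFrom_of_deriv h)

lemma MaxConsistent.mem_of_axiom {A : Fm} (h : JNoCAxiom A) : A ∈ Γ :=
  hΓ.mem_of_deriv_s7 (.ax h)

lemma MaxConsistent.mem_of_entails {As : List Fm} {B : Fm} (h : Entails As B)
    (hAs : ∀ A ∈ As, A ∈ Γ) : B ∈ Γ :=
  hΓ.mem_of_derivableFrom (.of_entails h fun A hA => derivableFrom_of_mem (hAs A hA))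

lemma MaxConsistent.bot_not_mem : Fm.bot ∉ Γ :=
  fun h => hΓ.1 (derivableFrom_of_mem h)

lemma MaxConsistent.imp_mem_iff_s7 (F G : Fm) : Fm.imp F G ∈ Γ ↔ F ∉ Γ ∨ G ∈ Γ := by
  refine ⟨fun hFG => or_iff_not_imp_left.2 fun hF => ?_, ?_⟩
  · exact hΓ.mem_of_entails (entails_mp F G) (by simp [hFG, not_not.1 hF])
  · rintro (hF | hG)
    · exact hΓ.mem_of_entails (entails_imp_of_neg F G) (by simp [hΓ.neg_mem hF])
    · exact hΓ.mem_of_entails (entails_imp_of_right F G) (by simp [hG])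

end MaxConsistent

lemma canonicalModel_E_subset_ts_iff (Ax : Fm → Prop) (CS : Set (Nat × Fm)) (Γ : Set Fm)
    (t : Tm) (F : Fm) :
    (canonicalModel Ax CS).E Γ t ⊆ (canonicalModel Ax CS).ts F ↔ Fm.just t F ∈ Γ :=
  ⟨fun h => h (show {G | Fm.just t G ∈ Γ} ⊆ _ from subset_rfl), fun h _ hΔ => hΔ h⟩

lemma canonicalModel_coreConds (hne : ∃ Γ, MaxConsistent JNoCAxiom CS Γ) :
    CoreConds CS (canonicalModel JNoCAxiom CS) := by
  refine ⟨hne, fun (Γ : Set Fm) (hΓ : MaxConsistent JNoCAxiom CS Γ) => ⟨hΓ.bot_not_mem,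
    hΓ.imp_mem_iff_s7, fun t F => (canonicalModel_E_subset_ts_iff _ CS Γ t F).symm, ?_, ?_, ?_⟩⟩
  · refine fun s t Δ hΔ => ⟨fun A hA => hΔ ?_, fun A hA => hΔ ?_⟩
    · exact hΓ.mem_of_entails (entails_mp_disj_left (Fm.just s A) (Fm.just t A) _)
        (by simpa [hΓ.mem_of_axiom (.jplus s t A)] using hA)
    · exact hΓ.mem_of_entails (entails_mp_disj_right (Fm.just s A) (Fm.just t A) _)
        (by simpa [hΓ.mem_of_axiom (.jplus s t A)] using hA)
  · rintro s t Δ hΔ F ⟨H, hs, ht⟩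
    replace hs := (canonicalModel_E_subset_ts_iff _ CS Γ s _).1 hs
    replace ht := (canonicalModel_E_subset_ts_iff _ CS Γ t _).1 ht
    exact hΔ (hΓ.mem_of_entails (entails_mp₂ (Fm.just s (Fm.imp H F)) (Fm.just t H) _)
      (by simp [hs, ht, hΓ.mem_of_axiom (.j s t H F)]))
  · refine fun c A hcA => ⟨?_, fun n => ?_⟩
    · exact (canonicalModel_E_subset_ts_iff _ CS Γ _ A).2 (hΓ.mem_of_deriv_s7 (.an 0 hcA))
    · exact (canonicalModel_E_subset_ts_iff _ CS Γ _ _).2 (hΓ.mem_of_deriv_s7 (.an (n + 1) hcA))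

lemma canonicalModel_isNoCModel (hne : ∃ Γ, MaxConsistent JNoCAxiom CS Γ) :
    IsNoCModel CS (canonicalModel JNoCAxiom CS) := by
  refine ⟨canonicalModel_coreConds hne,
    fun (Γ : Set Fm) (hΓ : MaxConsistent JNoCAxiom CS Γ) t =>
      ⟨{F | Fm.just t F ∈ Γ}, fun A => ?_, fun _ h => h⟩⟩
  rw [← not_and_or]
  rintro ⟨hA, hnA⟩
  refine hΓ.bot_not_mem (hΓ.mem_of_entails
    (entails_bot_of_not_conj (Fm.just t A) (Fm.just t (Fm.neg A))) ?_)
  simp [show Fm.just t A ∈ Γ from hA, show Fm.just t (Fm.neg A) ∈ Γ from hnA,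
    hΓ.mem_of_axiom (.noc t A)]

lemma consistentSet_singleton_neg {F : Fm} (h : ¬ Deriv JNoCAxiom CS F) :
    ConsistentSet JNoCAxiom CS {Fm.neg F} := by
  rintro ⟨L, hL, hd⟩
  refine h (deriv_of_entails (As := [L.foldr Fm.imp Fm.bot]) (fun v hv hv' => ?_) (by simp [hd]))
  simp only [List.mem_cons, List.not_mem_nil, or_false, forall_eq, hv.foldr_imp, hv.1] at hv'
  by_contra hF
  refine absurd (hv' fun A hA => ?_) (by simp)
  rw [hL A hA, Fm.neg, hv.2, hv.1]
  simpa using hF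

theorem stmt_7_general (CS : Set (Nat × Fm))
    (F : Fm) (h : NoCValid CS F) :
    Deriv JNoCAxiom CS F := by
  by_contra hF
  obtain ⟨Γ, hnegF, hΓ⟩ := (consistentSet_singleton_neg hF).exists_maxConsistent_superset
  have hFΓ : F ∈ Γ := h _ (canonicalModel_isNoCModel ⟨Γ, hΓ⟩) Γ hΓ
  exact ((hΓ.imp_mem_iff_s7 F Fm.bot).1 (hnegF rfl)).elim (· hFΓ) hΓ.bot_not_mem

/-- Completeness of JNoC_CS with respect to NoC CS-subset models, for arbitrary CS. -/
theorem stmt_7 (CS : Set (Nat × Fm)) (hCS : IsConstSpec JNoCAxiom CS)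
    (F : Fm) (h : NoCValid CS F) :
    Deriv JNoCAxiom CS F :=
  stmt_7_general CS F h
end
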